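/- arXiv:2504.01160 — 2 statements merged into one kernel-verified Lean document; each statement's English description precedes it below -/
import Mathlib

section
/- If f: ℝⁿ → ℝ is 1-strongly convex, the partial derivative of the dual function Ψ(y) = f*(Aᵀy) - bᵀy along the i-th coordinate is Lipschitz with constant ‖a_i‖₂²: |∇_iΨ(y + h·e_i) - ∇_iΨ(y)| ≤ ‖a_i‖₂²·|h| for all y ∈ ℝᵐ, h ∈ ℝ. -/
/-- The Fenchel conjugate `f*(x*) = sup_y ⟨x*, y⟩ - f(y)`. -/
noncomputable def fenchel {n : ℕ} (f : EuclideanSpace ℝ (Fin n) → ℝ)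
    (xs : EuclideanSpace ℝ (Fin n)) : ℝ := ⨆ y, inner ℝ xs y - f y

/-!
A strongly convex `f` grows quadratically, so `⟨x, ·⟩ - f` attains its maximum at some `p(x)`, and
comparing `fenchel f` with the affine minorant `x' ↦ ⟨x', p(x)⟩ - f (p(x))` that touches it at `x`
shows `∇f*(x) = p(x)`. Strong convexity at the maximizer gives
`⟨x, z - p(x)⟩ + ½‖z - p(x)‖² ≤ f z - f (p(x))`; adding this for `x = u, z = p(v)` and
`x = v, z = p(u)` yields `‖p(u) - p(v)‖² ≤ ⟨u - v, p(u) - p(v)⟩`, so `∇f*` is 1-Lipschitz.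
Finally `Aᵀ(y + h eᵢ) = Aᵀy + h aᵢ`, so `∇ᵢΨ` changes by `⟨aᵢ, ∇f*(Aᵀy + h aᵢ) - ∇f*(Aᵀy)⟩`,
which Cauchy–Schwarz bounds by `‖aᵢ‖ · |h| ‖aᵢ‖`.
-/

open Set Filter Topology InnerProductSpace Matrix

section NormedSpace

variable {E : Type*} [NormedAddCommGroup E] [NormedSpace ℝ E] {f : E → ℝ} {m : ℝ}

lemma StrongConvexOn.add_sq_norm_sub_le_of_isMinOn {s : Set E} (hf : StrongConvexOn s m f)
    {p z : E} (hp : p ∈ s) (hz : z ∈ s) (hmin : IsMinOn f s p) :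
    f p + m / 2 * ‖z - p‖ ^ 2 ≤ f z := by
  have hshrink : ∀ t ∈ Ioo (0 : ℝ) 1, (1 - t) * (m / 2 * ‖z - p‖ ^ 2) ≤ f z - f p := by
    rintro t ⟨ht₀, ht₁⟩
    have hseg := hf.2 hz hp ht₀.le (sub_nonneg.2 ht₁.le) (add_sub_cancel t 1)
    have hle : f p ≤ f (t • z + (1 - t) • p) :=
      hmin (hf.1 hz hp ht₀.le (sub_nonneg.2 ht₁.le) (add_sub_cancel t 1))
    simp only [smul_eq_mul] at hseg
    refine le_of_mul_le_mul_left ?_ ht₀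
    linarith
  have hlim : Tendsto (fun t : ℝ => (1 - t) * (m / 2 * ‖z - p‖ ^ 2)) (𝓝[>] 0)
      (𝓝 (m / 2 * ‖z - p‖ ^ 2)) := by
    have : Continuous fun t : ℝ => (1 - t) * (m / 2 * ‖z - p‖ ^ 2) := by fun_prop
    simpa using (this.tendsto 0).mono_left nhdsWithin_le_nhds
  have := le_of_tendsto hlim (eventually_of_mem (Ioo_mem_nhdsGT one_pos) hshrink)
  linarith

lemma StrongConvexOn.continuous [FiniteDimensional ℝ E] (hf : StrongConvexOn univ m f)
    (hm : 0 ≤ m) : Continuous f :=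
  continuousOn_univ.1 <| (hf.convexOn fun r => by positivity).continuousOn isOpen_univ

lemma StrongConvexOn.tendsto_cocompact_atTop [ProperSpace E] (hf : StrongConvexOn univ m f)
    (hm : 0 < m) (hfc : Continuous f) : Tendsto f (cocompact E) atTop := by
  obtain ⟨C, hC⟩ := (isCompact_closedBall (0 : E) 1).bddBelow_image hfc.continuousOn
  set K := m / 2 - C + |f 0| with hK
  -- compare `z` with the point `‖z‖⁻¹ • z` of the unit ball on the segment `[0, z]`
  have hgrowth : ∀ z : E, 1 ≤ ‖z‖ → ‖z‖ * (m / 2 * ‖z‖ - K) ≤ f z := by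
    intro z hz
    set t := ‖z‖ with ht_def
    have ht : 0 < t := by linarith
    have hseg := hf.2 (mem_univ z) (mem_univ 0) (inv_nonneg.2 ht.le)
      (sub_nonneg.2 (inv_le_one_of_one_le₀ hz)) (add_sub_cancel _ 1)
    simp only [smul_zero, add_zero, sub_zero, smul_eq_mul, ← ht_def] at hseg
    have hball : C ≤ f (t⁻¹ • z) :=
      hC ⟨_, by simp [norm_smul, ← ht_def, abs_of_pos ht, ht.ne'], rfl⟩
    have hray : t * f (t⁻¹ • z) ≤ f z + (t - 1) * f 0 - (t - 1) * (m / 2 * t) := by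
      have := mul_le_mul_of_nonneg_left hseg ht.le
      field_simp at this ⊢
      linarith
    rw [hK]
    nlinarith [mul_le_mul_of_nonneg_left hball ht.le,
      mul_nonneg (sub_nonneg.2 hz) (sub_nonneg.2 (le_abs_self (f 0))), abs_nonneg (f 0)]
  have hpoly : Tendsto (fun t : ℝ => t * (m / 2 * t - K)) atTop atTop :=
    tendsto_id.atTop_mul_atTop₀ (tendsto_atTop_add_const_right _ (-K)
      (tendsto_id.const_mul_atTop (by positivity)))
  refine tendsto_atTop_mono' _ ?_ (hpoly.comp tendsto_norm_cocompact_atTop)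
  filter_upwards [tendsto_norm_cocompact_atTop.eventually_ge_atTop 1] with z hz
    using hgrowth z hz

end NormedSpace

section InnerProductSpace

variable {E : Type*} [NormedAddCommGroup E] [InnerProductSpace ℝ E] {f : E → ℝ} {m : ℝ}

lemma StrongConvexOn.sub_inner {s : Set E} (hf : StrongConvexOn s m f) (x : E) :
    StrongConvexOn s m fun z => f z - inner ℝ x z := by
  have := hf.sub (uniformConcaveOn_zero.2 ((innerₛₗ ℝ x).concaveOn hf.1))
  rwa [add_zero] at this

lemma StrongConvexOn.exists_isMaxOn_inner_sub [FiniteDimensional ℝ E]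
    (hf : StrongConvexOn univ m f) (hm : 0 < m) (x : E) :
    ∃ p, IsMaxOn (fun z => inner ℝ x z - f z) univ p := by
  have hF := hf.sub_inner x
  obtain ⟨p, hp⟩ := (hF.continuous hm.le).exists_forall_le
    (hF.tendsto_cocompact_atTop hm (hF.continuous hm.le))
  exact ⟨p, isMaxOn_univ_iff.2 fun z => by linarith [hp z]⟩

lemma StrongConvexOn.inner_sub_add_sq_le_of_isMaxOn (hf : StrongConvexOn univ m f) {x p : E}
    (hp : IsMaxOn (fun z => inner ℝ x z - f z) univ p) (z : E) :
    inner ℝ x (z - p) + m / 2 * ‖z - p‖ ^ 2 ≤ f z - f p := by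
  have hmin : IsMinOn (fun z => f z - inner ℝ x z) univ p :=
    isMinOn_univ_iff.2 fun w => by linarith [isMaxOn_univ_iff.1 hp w]
  have := (hf.sub_inner x).add_sq_norm_sub_le_of_isMinOn (mem_univ p) (mem_univ z) hmin
  rw [inner_sub_right]
  linarith

lemma StrongConvexOn.mul_norm_sub_le_of_isMaxOn (hf : StrongConvexOn univ m f) {u v pu pv : E}
    (hpu : IsMaxOn (fun z => inner ℝ u z - f z) univ pu)
    (hpv : IsMaxOn (fun z => inner ℝ v z - f z) univ pv) :
    m * ‖pu - pv‖ ≤ ‖u - v‖ := by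
  have hu := hf.inner_sub_add_sq_le_of_isMaxOn hpu pv
  have hv := hf.inner_sub_add_sq_le_of_isMaxOn hpv pu
  have hmono : m * ‖pu - pv‖ ^ 2 ≤ ‖u - v‖ * ‖pu - pv‖ := by
    have hcs := real_inner_le_norm (u - v) (pu - pv)
    rw [inner_sub_left] at hcs
    rw [← neg_sub pu pv, inner_neg_right, norm_neg] at hu
    linarith
  rcases (norm_nonneg (pu - pv)).eq_or_lt with hzero | hpos
  · rw [← hzero, mul_zero]
    exact norm_nonneg _
  · nlinarith

lemma HasGradientAt.eq_of_le_of_eq [CompleteSpace E] {φ ψ : E → ℝ} {a b x : E}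
    (hφ : HasGradientAt φ a x) (hψ : HasGradientAt ψ b x) (hle : ∀ y, φ y ≤ ψ y)
    (heq : φ x = ψ x) : a = b := by
  have hmin : IsLocalMin (ψ - φ) x :=
    Eventually.of_forall fun y => by simp only [Pi.sub_apply]; linarith [hle y]
  have := hmin.hasFDerivAt_eq_zero (hψ.hasFDerivAt.sub hφ.hasFDerivAt)
  exact ((toDual ℝ E).injective (sub_eq_zero.1 this)).symm

lemma hasGradientAt_inner_const_left_sub [CompleteSpace E] (p : E) (c : ℝ) (x : E) :
    HasGradientAt (fun y => inner ℝ y p - c) p x := by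
  rw [hasGradientAt_iff_hasFDerivAt]
  have := ((toDual ℝ E p).hasFDerivAt (x := x)).sub_const c
  simpa [real_inner_comm] using this

end InnerProductSpace

section Fenchel

variable {n : ℕ} {f : EuclideanSpace ℝ (Fin n) → ℝ} {m : ℝ}

lemma fenchel_eq_of_isMaxOn {x p : EuclideanSpace ℝ (Fin n)}
    (hp : IsMaxOn (fun z => inner ℝ x z - f z) univ p) : fenchel f x = inner ℝ x p - f p :=
  le_antisymm (ciSup_le (isMaxOn_univ_iff.1 hp))
    (le_ciSup ⟨_, forall_mem_range.2 (isMaxOn_univ_iff.1 hp)⟩ p)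

lemma StrongConvexOn.inner_sub_le_fenchel (hf : StrongConvexOn univ m f) (hm : 0 < m)
    (x z : EuclideanSpace ℝ (Fin n)) : inner ℝ x z - f z ≤ fenchel f x := by
  obtain ⟨p, hp⟩ := hf.exists_isMaxOn_inner_sub hm x
  rw [fenchel_eq_of_isMaxOn hp]
  exact isMaxOn_univ_iff.1 hp z

lemma StrongConvexOn.eq_of_hasGradientAt_fenchel (hf : StrongConvexOn univ m f) (hm : 0 < m)
    {x g p : EuclideanSpace ℝ (Fin n)} (hg : HasGradientAt (fenchel f) g x)
    (hp : IsMaxOn (fun z => inner ℝ x z - f z) univ p) : g = p :=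
  ((hasGradientAt_inner_const_left_sub p (f p) x).eq_of_le_of_eq hg
    (fun y => hf.inner_sub_le_fenchel hm y p) (fenchel_eq_of_isMaxOn hp).symm).symm

lemma StrongConvexOn.mul_norm_sub_le_of_hasGradientAt_fenchel (hf : StrongConvexOn univ m f)
    (hm : 0 < m) {g : EuclideanSpace ℝ (Fin n) → EuclideanSpace ℝ (Fin n)}
    (hg : ∀ x, HasGradientAt (fenchel f) (g x) x) (u v : EuclideanSpace ℝ (Fin n)) :
    m * ‖g u - g v‖ ≤ ‖u - v‖ := by
  obtain ⟨pu, hpu⟩ := hf.exists_isMaxOn_inner_sub hm u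
  obtain ⟨pv, hpv⟩ := hf.exists_isMaxOn_inner_sub hm v
  rw [hf.eq_of_hasGradientAt_fenchel hm (hg u) hpu, hf.eq_of_hasGradientAt_fenchel hm (hg v) hpv]
  exact hf.mul_norm_sub_le_of_isMaxOn hpu hpv

end Fenchel

/-- If `f` is 1-strongly convex, the `i`-th partial derivative of the dual
function `Ψ(y) = f*(Aᵀy) - bᵀy`, namely `∇_iΨ(y) = ⟨a_i, ∇f*(Aᵀy)⟩ - b_i`,
is Lipschitz with constant `‖a_i‖₂²`. -/
theorem dual_partial_derivative_coordinatewise_lipschitz {m n : ℕ}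
    (A : Matrix (Fin m) (Fin n) ℝ) (b : Fin m → ℝ)
    (f : EuclideanSpace ℝ (Fin n) → ℝ)
    (hf : StrongConvexOn Set.univ 1 f)
    (g : EuclideanSpace ℝ (Fin n) → EuclideanSpace ℝ (Fin n))
    (hg : ∀ xs, HasGradientAt (fenchel f) (g xs) xs)
    (Gi : Fin m → (Fin m → ℝ) → ℝ)
    (hGi : ∀ i y, Gi i y = (∑ j, A i j * g (WithLp.toLp 2 (A.transpose.mulVec y) : EuclideanSpace ℝ (Fin n)) j) - b i)
    (i : Fin m) (y : Fin m → ℝ) (h : ℝ) :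
    |Gi i (y + h • (Pi.single i 1 : Fin m → ℝ)) - Gi i y| ≤ (∑ j, (A i j) ^ 2) * |h| := by
  set a : EuclideanSpace ℝ (Fin n) := WithLp.toLp 2 (A i)
  set u : EuclideanSpace ℝ (Fin n) := WithLp.toLp 2 (Aᵀ *ᵥ y)
  have hshift : (WithLp.toLp 2 (Aᵀ *ᵥ (y + h • Pi.single i 1)) : EuclideanSpace ℝ (Fin n))
      = u + h • a := by
    ext j
    simp [u, a, mulVec_add, mulVec_smul]
  have hdiff : Gi i (y + h • Pi.single i 1) - Gi i y = inner ℝ a (g (u + h • a) - g u) := by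
    simp [hGi, hshift, u, a, PiLp.inner_apply, mul_sub, Finset.sum_sub_distrib, mul_comm]
  have hlip := hf.mul_norm_sub_le_of_hasGradientAt_fenchel one_pos hg (u + h • a) u
  rw [one_mul, add_sub_cancel_left] at hlip
  rw [hdiff]
  calc |inner ℝ a (g (u + h • a) - g u)| ≤ ‖a‖ * ‖g (u + h • a) - g u‖ :=
        abs_real_inner_le_norm _ _
    _ ≤ ‖a‖ * ‖h • a‖ := by gcongr
    _ = (∑ j, A i j ^ 2) * |h| := by
        rw [norm_smul, Real.norm_eq_abs, ← EuclideanSpace.real_norm_sq_eq a]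
        ring
end

section
/- The sequence defined by θ₀ ∈ (0, 1] and θ_{k+1} = (√(θ_k⁴ + 4θ_k²) - θ_k²)/2 satisfies the bounds (2 - θ₀)/(k + (2 - θ₀)/θ₀) ≤ θ_k ≤ 2/(k + 2/θ₀) for all k ≥ 0. -/
/-!
Passing to `u k = 1 / θ k`, the recursion `θ_{k+1}² = (1 - θ_{k+1}) θ_k²` becomes
`u_{k+1}² - u_{k+1} = u_k²`, i.e. `u_{k+1} - u_k = u_{k+1} / (u_{k+1} + u_k)`. Since `θ` decreases,
this increment is at least `1/2`, and since `θ_{k+1} ≥ (1 - θ_k) θ_k` it is at most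
`1 / (2 - θ_k) ≤ 1 / (2 - θ₀)`. Summing the increments and inverting gives both bounds.
-/

noncomputable def thetaStep (a : ℝ) : ℝ := (√(a ^ 4 + 4 * a ^ 2) - a ^ 2) / 2

lemma thetaStep_pos {a : ℝ} (ha : a ≠ 0) : 0 < thetaStep a := by
  have hsq : a ^ 2 < √(a ^ 4 + 4 * a ^ 2) :=
    Real.lt_sqrt_of_sq_lt (by nlinarith [pow_pos (sq_pos_of_ne_zero ha) 1])
  unfold thetaStep
  linarith

lemma thetaStep_sq (a : ℝ) : thetaStep a ^ 2 = (1 - thetaStep a) * a ^ 2 := by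
  have hs : √(a ^ 4 + 4 * a ^ 2) ^ 2 = a ^ 4 + 4 * a ^ 2 := Real.sq_sqrt (by positivity)
  unfold thetaStep
  linear_combination hs / 4

section step

variable {a b : ℝ} (ha : 0 < a) (hb : 0 < b) (h : b ^ 2 = (1 - b) * a ^ 2)
include ha hb h

lemma lt_of_sq_eq_one_sub_mul_sq : b < a :=
  lt_of_pow_lt_pow_left₀ 2 ha.le (by nlinarith [mul_pos hb (pow_pos ha 2)])

lemma inv_add_half_le_inv_of_sq_eq : a⁻¹ + 1 / 2 ≤ b⁻¹ := by
  have hba := lt_of_sq_eq_one_sub_mul_sq ha hb h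
  rw [← one_div, ← one_div, div_add_div _ _ ha.ne' two_ne_zero, div_le_div_iff₀ (by positivity) hb]
  nlinarith

lemma inv_le_inv_add_inv_two_sub_of_sq_eq (ha1 : a ≤ 1) : b⁻¹ ≤ a⁻¹ + (2 - a)⁻¹ := by
  have hba := lt_of_sq_eq_one_sub_mul_sq ha hb h
  have hlow : (1 - a) * a ≤ b := by
    nlinarith [sq_nonneg ((1 - a) * a - b)]
  rw [← one_div, ← one_div, ← one_div, div_add_div _ _ ha.ne' (by linarith),
    div_le_div_iff₀ hb (by nlinarith)]
  nlinarith

end step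

lemma add_mul_le_of_le_sub_succ {u : ℕ → ℝ} {c : ℝ} (h : ∀ n, c ≤ u (n + 1) - u n) (n : ℕ) :
    u 0 + n * c ≤ u n := by
  induction n with
  | zero => simp
  | succ n ih => push_cast; linarith [h n]

lemma le_add_mul_of_sub_succ_le {u : ℕ → ℝ} {c : ℝ} (h : ∀ n, u (n + 1) - u n ≤ c) (n : ℕ) :
    u n ≤ u 0 + n * c := by
  induction n with
  | zero => simp
  | succ n ih => push_cast; linarith [h n]

section sequence

variable {θ : ℕ → ℝ} (hrec : ∀ k, θ (k + 1) = thetaStep (θ k))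
include hrec

lemma theta_sq_succ (n : ℕ) : θ (n + 1) ^ 2 = (1 - θ (n + 1)) * θ n ^ 2 :=
  hrec n ▸ thetaStep_sq (θ n)

variable (h0 : 0 < θ 0)
include h0

lemma theta_pos (n : ℕ) : 0 < θ n := by
  induction n with
  | zero => exact h0
  | succ n ih => exact hrec n ▸ thetaStep_pos ih.ne'

lemma theta_antitone : Antitone θ :=
  antitone_nat_of_succ_le fun n =>
    (lt_of_sq_eq_one_sub_mul_sq (theta_pos hrec h0 n) (theta_pos hrec h0 (n + 1))
      (theta_sq_succ hrec n)).le

lemma inv_theta_zero_add_le (n : ℕ) : (θ 0)⁻¹ + n * (1 / 2) ≤ (θ n)⁻¹ :=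
  add_mul_le_of_le_sub_succ (u := fun n => (θ n)⁻¹) (fun n => le_sub_iff_add_le'.2 <|
    inv_add_half_le_inv_of_sq_eq (theta_pos hrec h0 n) (theta_pos hrec h0 (n + 1))
      (theta_sq_succ hrec n)) n

lemma inv_theta_le_add (h1 : θ 0 ≤ 1) (n : ℕ) : (θ n)⁻¹ ≤ (θ 0)⁻¹ + n * (2 - θ 0)⁻¹ := by
  refine le_add_mul_of_sub_succ_le (u := fun n => (θ n)⁻¹) (fun n => ?_) n
  have hθn : θ n ≤ θ 0 := theta_antitone hrec h0 (Nat.zero_le n)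
  have hstep := inv_le_inv_add_inv_two_sub_of_sq_eq (theta_pos hrec h0 n)
    (theta_pos hrec h0 (n + 1)) (theta_sq_succ hrec n) (hθn.trans h1)
  have hmono : (2 - θ n)⁻¹ ≤ (2 - θ 0)⁻¹ := inv_anti₀ (by linarith) (by linarith)
  linarith

end sequence

/-- The sequence `θ₀ ∈ (0,1]`, `θ_{k+1} = (√(θ_k⁴ + 4θ_k²) - θ_k²)/2` satisfies
`(2 - θ₀)/(k + (2 - θ₀)/θ₀) ≤ θ_k ≤ 2/(k + 2/θ₀)`. -/
theorem theta_bounds (θ : ℕ → ℝ) (h0 : 0 < θ 0) (h1 : θ 0 ≤ 1)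
    (hrec : ∀ k, θ (k + 1) = (Real.sqrt ((θ k) ^ 4 + 4 * (θ k) ^ 2) - (θ k) ^ 2) / 2)
    (k : ℕ) :
    (2 - θ 0) / (k + (2 - θ 0) / θ 0) ≤ θ k ∧ θ k ≤ 2 / (k + 2 / θ 0) := by
  have hrec' : ∀ k, θ (k + 1) = thetaStep (θ k) := hrec
  have hθk := theta_pos hrec' h0 k
  have hc : 0 < 2 - θ 0 := by linarith
  have hlower : (2 - θ 0) / (k + (2 - θ 0) / θ 0) = ((θ 0)⁻¹ + k * (2 - θ 0)⁻¹)⁻¹ := by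
    field_simp
    ring
  have hupper : 2 / (k + 2 / θ 0) = ((θ 0)⁻¹ + k * (1 / 2))⁻¹ := by
    field_simp
    ring
  rw [hlower, hupper]
  constructor
  · exact inv_le_of_inv_le₀ hθk (inv_theta_le_add hrec' h0 h1 k)
  · exact le_inv_of_le_inv₀ (by positivity) (inv_theta_zero_add_le hrec' h0 k)
end
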